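/- Let f ∈ H² be an outer function and w ∈ 𝔻. Then the local Dirichlet integral 𝒟_w(f) = ∫_𝕋 (|f(ζ)|² − |f(w)|²)/|ζ − w|² dm(ζ) satisfies (1 − |w|²) 𝒟_w(f) = ∫_𝕋 |f|² dσ_w − exp(∫_𝕋 2 log|f| dσ_w), where dσ_w(ζ) = (1−|w|²)/|ζ−w|² dm(ζ) is the harmonic (Poisson) probability measure at w and m is normalized Lebesgue measure on 𝕋. -/

import Mathlib

/-!
The real part of the Herglotz kernel `(ζ + w) / (ζ - w)` is the Poisson kernel, so
`|f(w)| = exp (∫ u dσ_w)`. Since `(1 - |w|²) / |ζ - w|²` is the density of the probability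
measure `σ_w`, multiplying the local Dirichlet integral by `1 - |w|²` turns it into
`∫ |f|² dσ_w - |f(w)|²`.
-/

open MeasureTheory Complex Real

/-- The normalized Lebesgue measure on the circle, parametrized by θ ∈ (0, 2π]. -/
noncomputable def circMeasure : Measure ℝ :=
  (ENNReal.ofReal (2 * π))⁻¹ • (volume.restrict (Set.Ioc 0 (2 * π)))

open Metric InnerProductSpace

instance isProbabilityMeasure_circMeasure : IsProbabilityMeasure circMeasure := by
  constructor
  have h2π : (0 : ℝ) < 2 * π := by positivity
  rw [circMeasure, Measure.smul_apply, Measure.restrict_apply_univ, Real.volume_Ioc, sub_zero,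
    smul_eq_mul, ENNReal.inv_mul_cancel (by simpa using h2π) ENNReal.ofReal_ne_top]

theorem integral_circMeasure_eq_smul_intervalIntegral {E : Type*} [NormedAddCommGroup E]
    [NormedSpace ℝ E] (g : ℝ → E) :
    ∫ θ, g θ ∂circMeasure = (2 * π)⁻¹ • ∫ θ in 0..2 * π, g θ := by
  have h2π : (0 : ℝ) ≤ 2 * π := by positivity
  rw [circMeasure, integral_smul_measure, intervalIntegral.integral_of_le h2π,
    ENNReal.toReal_inv, ENNReal.toReal_ofReal h2π]

theorem circleAverage_eq_integral_circMeasure {E : Type*} [NormedAddCommGroup E]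
    [NormedSpace ℝ E] (F : ℂ → E) :
    circleAverage F 0 1 = ∫ θ, F (exp (θ * I)) ∂circMeasure := by
  simp [circleAverage_def, integral_circMeasure_eq_smul_intervalIntegral, circleMap]

theorem ContinuousOn.integrable_comp_exp_mul_I_mul {𝕜 : Type*} [NormedRing 𝕜] {K : ℂ → 𝕜}
    (hK : ContinuousOn K (sphere 0 1)) {g : ℝ → 𝕜} (hg : Integrable g circMeasure) :
    Integrable (fun θ : ℝ => K (exp (θ * I)) * g θ) circMeasure := by
  obtain ⟨C, hC⟩ := (isCompact_sphere (0 : ℂ) 1).exists_bound_of_continuousOn hK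
  have hexp : ∀ θ : ℝ, exp (θ * I) ∈ sphere (0 : ℂ) 1 := by simp
  exact hg.bdd_mul (hK.comp_continuous (by fun_prop) hexp).aestronglyMeasurable
    (ae_of_all _ fun θ => hC _ (hexp θ))

theorem continuousOn_herglotzRieszKernel_unitSphere {w : ℂ} (hw : ‖w‖ < 1) :
    ContinuousOn (herglotzRieszKernel 0 w) (sphere 0 1) := by
  simpa using continuousOn_herglotzRieszKernel_sphere (R := 1) (by simpa using hw)

theorem continuousOn_poissonKernel_unitSphere {w : ℂ} (hw : ‖w‖ < 1) :
    ContinuousOn (poissonKernel 0 w) (sphere 0 1) := by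
  rw [poissonKernel_eq_re_herglotzRieszKernel]
  exact continuous_re.comp_continuousOn (continuousOn_herglotzRieszKernel_unitSphere hw)

theorem poissonKernel_zero_exp_mul_I (w : ℂ) (θ : ℝ) :
    poissonKernel 0 w (exp (θ * I)) = (1 - ‖w‖ ^ 2) / ‖exp (θ * I) - w‖ ^ 2 := by
  simp [poissonKernel_def]

theorem integral_poissonKernel {w : ℂ} (hw : ‖w‖ < 1) :
    ∫ θ, poissonKernel 0 w (exp (θ * I)) ∂circMeasure = 1 := by
  have := HarmonicOnNhd.circleAverage_poissonKernel_smul (harmonicOnNhd_const (1 : ℝ))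
    (c := 0) (R := 1) (w := w) (by simpa using hw)
  simpa [circleAverage_eq_integral_circMeasure] using this

theorem norm_exp_integral_herglotz {u : ℝ → ℝ} (hu : Integrable u circMeasure) {w : ℂ}
    (hw : ‖w‖ < 1) :
    ‖exp (∫ θ, (exp (θ * I) + w) / (exp (θ * I) - w) * (u θ : ℂ) ∂circMeasure)‖ =
      Real.exp (∫ θ, u θ * poissonKernel 0 w (exp (θ * I)) ∂circMeasure) := by
  have hK : ∀ θ : ℝ, (exp (θ * I) + w) / (exp (θ * I) - w) =
      herglotzRieszKernel 0 w (exp (θ * I)) := by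
    simp [herglotzRieszKernel_def]
  simp_rw [hK]
  have hint : Integrable (fun θ : ℝ => herglotzRieszKernel 0 w (exp (θ * I)) * (u θ : ℂ))
      circMeasure :=
    (continuousOn_herglotzRieszKernel_unitSphere hw).integrable_comp_exp_mul_I_mul hu.ofReal
  rw [norm_exp, ← RCLike.re_to_complex, ← integral_re hint]
  simp [poissonKernel_eq_re_herglotzRieszKernel, mul_comm]

theorem one_sub_sq_mul_integral_sub_const_div {g : ℝ → ℝ} (hg : Integrable g circMeasure)
    {w : ℂ} (hw : ‖w‖ < 1) (c : ℝ) :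
    (1 - ‖w‖ ^ 2) * ∫ θ, (g θ - c) / ‖exp (θ * I) - w‖ ^ 2 ∂circMeasure =
      ∫ θ, g θ * poissonKernel 0 w (exp (θ * I)) ∂circMeasure - c := by
  have hP := continuousOn_poissonKernel_unitSphere hw
  calc (1 - ‖w‖ ^ 2) * ∫ θ, (g θ - c) / ‖exp (θ * I) - w‖ ^ 2 ∂circMeasure
      = ∫ θ, (g θ * poissonKernel 0 w (exp (θ * I)) - c * poissonKernel 0 w (exp (θ * I)))
          ∂circMeasure := by
        rw [← integral_const_mul]
        congr with θ
        rw [poissonKernel_zero_exp_mul_I]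
        ring
    _ = ∫ θ, g θ * poissonKernel 0 w (exp (θ * I)) ∂circMeasure - c := by
        rw [integral_sub, integral_const_mul, integral_poissonKernel hw, mul_one]
        · simpa only [mul_comm] using hP.integrable_comp_exp_mul_I_mul hg
        · simpa only [mul_comm] using hP.integrable_comp_exp_mul_I_mul (integrable_const c)

/-- `u θ` stands for `log |f(e^{iθ})|`. -/
theorem stmt_15 (u : ℝ → ℝ)
    (hu : Integrable u circMeasure)
    (hH2 : Integrable (fun θ => Real.exp (2 * u θ)) circMeasure)
    (f : ℂ → ℂ)
    (houter : ∀ z : ℂ, ‖z‖ < 1 →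
      f z = Complex.exp (∫ θ, ((Complex.exp (θ * Complex.I) + z) /
        (Complex.exp (θ * Complex.I) - z)) * (u θ : ℂ) ∂circMeasure))
    (w : ℂ) (hw : ‖w‖ < 1) :
    (1 - ‖w‖ ^ 2) *
      (∫ θ, (Real.exp (2 * u θ) - ‖f w‖ ^ 2) /
        ‖Complex.exp (θ * Complex.I) - w‖ ^ 2 ∂circMeasure) =
    (∫ θ, Real.exp (2 * u θ) *
        ((1 - ‖w‖ ^ 2) / ‖Complex.exp (θ * Complex.I) - w‖ ^ 2)
      ∂circMeasure) -
    Real.exp (∫ θ, (2 * u θ) *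
        ((1 - ‖w‖ ^ 2) / ‖Complex.exp (θ * Complex.I) - w‖ ^ 2)
      ∂circMeasure) := by
  have hfw : ‖f w‖ ^ 2 =
      Real.exp (∫ θ, 2 * u θ * poissonKernel 0 w (exp (θ * I)) ∂circMeasure) := by
    rw [houter w hw, norm_exp_integral_herglotz hu hw, ← Real.exp_nat_mul]
    simp only [mul_assoc, integral_const_mul, Nat.cast_ofNat]
  rw [one_sub_sq_mul_integral_sub_const_div hH2 hw, hfw]
  simp only [poissonKernel_zero_exp_mul_I]
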